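/- arXiv:1102.2065 — 2 statements merged into one kernel-verified Lean document; each statement's English description precedes it below -/
import Mathlib

section
/- Let n be a positive integer. There exists a balanced Steinhaus triangle of side length n in Z/4Z if and only if C(n+1,2) ≡ 0 (mod 4). -/
/-- Next row of a Steinhaus triangle: pairwise sums of adjacent entries. -/
def nextRow {m : ℕ} (l : List (ZMod m)) : List (ZMod m) :=
  List.zipWith (· + ·) l l.tail

/-- The rows of the Steinhaus triangle generated by the first row `l`. -/
def triangleRows {m : ℕ} (l : List (ZMod m)) : List (List (ZMod m)) :=
  (List.range l.length).map (fun i => nextRow^[i] l)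

/-- All entries of the Steinhaus triangle generated by `l`. -/
def triangleEntries {m : ℕ} (l : List (ZMod m)) : List (ZMod m) :=
  (triangleRows l).flatten

/-- The Steinhaus triangle of `l` is balanced: all elements of `ZMod m`
occur with the same multiplicity among its entries. -/
def IsBalanced {m : ℕ} (l : List (ZMod m)) : Prop :=
  ∀ a b : ZMod m, (triangleEntries l).count a = (triangleEntries l).count b

/-!
The triangle of a row of length `n` has `C(n + 1, 2)` entries, so balance over `ZMod m` forces
`m ∣ C(n + 1, 2)`; this gives necessity.

For sufficiency, take the first row to be a prefix of a sequence `f` that is periodic from index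
12 on and satisfies `nextSeq^[24] f = f`. The triangle of size `n + 24` is then 24 rows of lengths
`n + 24 - i` on top of a copy of the triangle of size `n`, and lengthening each of these rows by 24
adds one full period of that row. Hence the number of occurrences of each value in the triangle of
size `n + 24 k` is a quadratic polynomial in `k`, and balance for `k = 0, 1, 2` gives balance for
all `k`. Six such sequences, checked by evaluation, cover the residues `0, 7, 8, 15, 16, 23`
modulo 24, that is, all `n ≡ 0, 7 (mod 8)`.
-/

open Finset

variable {m : ℕ}

instance [NeZero m] : DecidablePred (IsBalanced (m := m)) :=
  fun _ => by unfold IsBalanced; infer_instance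

theorem List.sum_map_range {M : Type*} [AddCommMonoid M] (f : ℕ → M) (n : ℕ) :
    ((List.range n).map f).sum = ∑ i ∈ Finset.range n, f i := by
  rw [Finset.sum_eq_multiset_sum, Finset.range_val, Multiset.range, Multiset.map_coe,
    Multiset.sum_coe]

theorem sum_range_sub_eq_choose_two (n : ℕ) : ∑ i ∈ range n, (n - i) = (n + 1).choose 2 :=
  calc ∑ i ∈ range n, (n - i) = ∑ i ∈ range n, (i + 1) := by
        rw [← sum_range_reflect]
        exact sum_congr rfl fun i hi => by have := mem_range.1 hi; omega
    _ = ∑ i ∈ range (n + 1), i := (sum_range_succ' (fun i => i) n).symm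
    _ = (n + 1).choose 2 := by rw [sum_range_id, Nat.choose_two_right, Nat.add_sub_cancel]

theorem choose_two_succ_mod_four_eq_zero_iff (n : ℕ) :
    (n + 1).choose 2 % 4 = 0 ↔ n % 8 = 0 ∨ n % 8 = 7 := by
  obtain ⟨q, r, hr, rfl⟩ : ∃ q r, r < 8 ∧ n = 8 * q + r := ⟨n / 8, n % 8, by omega, by omega⟩
  have hexp : (8 * q + r + 1) * (8 * q + r) =
      2 * (4 * (8 * q * q + 2 * q * r + q)) + (r + 1) * r := by ring
  rw [Nat.choose_two_right, Nat.add_sub_cancel, hexp, Nat.mul_add_div two_pos]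
  interval_cases r <;> omega

theorem eq_of_const_second_difference {x y : ℕ → ℕ} {b c : ℕ}
    (hx : ∀ k, x (k + 2) + x k = 2 * x (k + 1) + b)
    (hy : ∀ k, y (k + 2) + y k = 2 * y (k + 1) + c)
    (h₀ : x 0 = y 0) (h₁ : x 1 = y 1) (h₂ : x 2 = y 2) (k : ℕ) : x k = y k := by
  have hbc : b = c := by
    have : x 2 + x 0 = 2 * x 1 + b := hx 0
    have : y 2 + y 0 = 2 * y 1 + c := hy 0
    omega
  suffices ∀ k, x k = y k ∧ x (k + 1) = y (k + 1) from (this k).1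
  intro k
  induction k with
  | zero => exact ⟨h₀, h₁⟩
  | succ k ih =>
    have : x (k + 1 + 1) + x k = 2 * x (k + 1) + b := hx k
    have : y (k + 1 + 1) + y k = 2 * y (k + 1) + c := hy k
    exact ⟨ih.2, by omega⟩

theorem perm_map_range_add_of_periodic {α : Type*} {g : ℕ → α} {P : ℕ}
    (h : Function.Periodic g P) (s : ℕ) :
    ((List.range P).map (fun j => g (s + j))).Perm ((List.range P).map g) := by
  induction s with
  | zero => simp
  | succ s ih =>
    refine List.Perm.trans ?_ ih
    cases P with
    | zero => simp
    | succ P =>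
      have hs : (List.range (P + 1)).map (fun j => g (s + 1 + j)) =
          (List.range P).map (fun j => g (s + 1 + j)) ++ [g s] := by
        rw [List.range_succ, List.map_append, List.map_singleton, ← h s, Nat.add_right_comm s 1 P,
          add_assoc]
      have hs' : (List.range (P + 1)).map (fun j => g (s + j)) =
          g s :: (List.range P).map (fun j => g (s + 1 + j)) := by
        simp [List.range_succ_eq_map, add_assoc, add_comm 1]
      rw [hs, hs']
      exact List.perm_append_singleton _ _

theorem count_map_range_add_period {α : Type*} [DecidableEq α] {f : ℕ → α} {N P : ℕ}
    (h : Function.Periodic (fun j => f (N + j)) P) {k : ℕ} (hk : N ≤ k) (a : α) :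
    ((List.range (k + P)).map f).count a =
      ((List.range k).map f).count a + ((List.range P).map (fun j => f (N + j))).count a := by
  obtain ⟨s, rfl⟩ := Nat.exists_eq_add_of_le hk
  rw [List.range_add, List.map_append, List.count_append, List.map_map]
  simpa [Function.comp_def, add_assoc] using (perm_map_range_add_of_periodic h s).count_eq a

theorem length_nextRow (l : List (ZMod m)) : (nextRow l).length = l.length - 1 := by
  simp [nextRow]

theorem length_nextRow_iterate (l : List (ZMod m)) (i : ℕ) :
    (nextRow^[i] l).length = l.length - i := by
  induction i with
  | zero => rfl
  | succ i ih => rw [Function.iterate_succ_apply', length_nextRow, ih, Nat.sub_sub]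

theorem length_triangleEntries (l : List (ZMod m)) :
    (triangleEntries l).length = (l.length + 1).choose 2 := by
  rw [triangleEntries, triangleRows, List.length_flatten, List.map_map,
    List.sum_map_range, ← sum_range_sub_eq_choose_two]
  exact sum_congr rfl fun i _ => length_nextRow_iterate l i

theorem dvd_choose_two_of_isBalanced [NeZero m] {l : List (ZMod m)} (h : IsBalanced l) :
    m ∣ (l.length + 1).choose 2 := by
  have hsum := Multiset.sum_count_eq_card (s := univ)
    (m := (triangleEntries l : Multiset (ZMod m))) fun a _ => mem_univ a
  simp only [Multiset.coe_count, Multiset.coe_card, fun a => h a 0, sum_const, card_univ,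
    ZMod.card, smul_eq_mul, length_triangleEntries] at hsum
  exact ⟨_, hsum.symm⟩

def nextSeq (f : ℕ → ZMod m) : ℕ → ZMod m := fun j => f j + f (j + 1)

theorem nextRow_map_range_succ (f : ℕ → ZMod m) (k : ℕ) :
    nextRow ((List.range (k + 1)).map f) = (List.range k).map (nextSeq f) := by
  apply List.ext_getElem
  · simp [nextRow]
  · intro i _ _
    simp [nextRow, nextSeq]

theorem nextRow_iterate_map_range (f : ℕ → ZMod m) (i n : ℕ) :
    nextRow^[i] ((List.range n).map f) = (List.range (n - i)).map (nextSeq^[i] f) := by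
  induction i generalizing n f with
  | zero => rfl
  | succ i ih =>
    rw [Function.iterate_succ_apply, Function.iterate_succ_apply]
    cases n with
    | zero => simpa [nextRow] using ih (nextSeq f) 0
    | succ n => rw [nextRow_map_range_succ, ih, Nat.succ_sub_succ]

theorem count_triangleEntries_map_range (f : ℕ → ZMod m) (n : ℕ) (a : ZMod m) :
    (triangleEntries ((List.range n).map f)).count a =
      ∑ i ∈ range n, ((List.range (n - i)).map (nextSeq^[i] f)).count a := by
  rw [triangleEntries, triangleRows, List.count_flatten, List.map_map, List.length_map,
    List.length_range, List.sum_map_range]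
  simp only [Function.comp_apply, nextRow_iterate_map_range]

theorem periodic_nextSeq_iterate {f : ℕ → ZMod m} {N P : ℕ}
    (h : Function.Periodic (fun j => f (N + j)) P) (i : ℕ) :
    Function.Periodic (fun j => nextSeq^[i] f (N + j)) P := by
  induction i with
  | zero => exact h
  | succ i ih =>
    intro j
    simp only [Function.iterate_succ_apply', nextSeq]
    have h₁ : nextSeq^[i] f (N + (j + P)) = nextSeq^[i] f (N + j) := ih j
    have h₂ : nextSeq^[i] f (N + (j + 1 + P)) = nextSeq^[i] f (N + (j + 1)) := ih (j + 1)
    rw [show N + (j + P) + 1 = N + (j + 1 + P) by omega, h₁, h₂, add_assoc]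

section Recurrence

variable {f : ℕ → ZMod m} {N P : ℕ}

theorem count_triangleEntries_add_period (hfix : nextSeq^[P] f = f) (n : ℕ) (a : ZMod m) :
    (triangleEntries ((List.range (n + P)).map f)).count a =
      ∑ i ∈ range P, ((List.range (n + P - i)).map (nextSeq^[i] f)).count a +
        (triangleEntries ((List.range n).map f)).count a := by
  rw [count_triangleEntries_map_range, count_triangleEntries_map_range, add_comm n P,
    sum_range_add]
  congr 1
  refine sum_congr rfl fun i _ => ?_
  rw [Nat.add_sub_add_left, add_comm P i, Function.iterate_add_apply, hfix]

theorem sum_count_rows_add_period (hper : Function.Periodic (fun j => f (N + j)) P) {n : ℕ}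
    (hn : N ≤ n + 1) (a : ZMod m) :
    ∑ i ∈ range P, ((List.range (n + P + P - i)).map (nextSeq^[i] f)).count a =
      ∑ i ∈ range P, ((List.range (n + P - i)).map (nextSeq^[i] f)).count a +
        ∑ i ∈ range P, ((List.range P).map (fun j => nextSeq^[i] f (N + j))).count a := by
  rw [← sum_add_distrib]
  refine sum_congr rfl fun i hi => ?_
  have hi := mem_range.1 hi
  rw [show n + P + P - i = n + P - i + P by omega]
  exact count_map_range_add_period (periodic_nextSeq_iterate hper i) (by omega) a

theorem count_triangleEntries_add_two_mul (hfix : nextSeq^[P] f = f)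
    (hper : Function.Periodic (fun j => f (N + j)) P) {n : ℕ} (hn : N ≤ n + 1) (a : ZMod m) :
    (triangleEntries ((List.range (n + 2 * P)).map f)).count a +
        (triangleEntries ((List.range n).map f)).count a =
      2 * (triangleEntries ((List.range (n + P)).map f)).count a +
        ∑ i ∈ range P, ((List.range P).map (fun j => nextSeq^[i] f (N + j))).count a := by
  have h₁ := count_triangleEntries_add_period hfix n a
  have h₂ := count_triangleEntries_add_period hfix (n + P) a
  have h₃ := sum_count_rows_add_period hper hn a
  rw [two_mul, ← add_assoc]
  omega

theorem isBalanced_map_range_add_mul (hfix : nextSeq^[P] f = f)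
    (hper : Function.Periodic (fun j => f (N + j)) P) {n : ℕ} (hn : N ≤ n + 1)
    (h₀ : IsBalanced ((List.range n).map f)) (h₁ : IsBalanced ((List.range (n + P)).map f))
    (h₂ : IsBalanced ((List.range (n + 2 * P)).map f)) (k : ℕ) :
    IsBalanced ((List.range (n + P * k)).map f) := by
  intro a b
  let c (x : ZMod m) (k : ℕ) := (triangleEntries ((List.range (n + P * k)).map f)).count x
  have hrec (x : ZMod m) (k : ℕ) : c x (k + 2) + c x k = 2 * c x (k + 1) +
      ∑ i ∈ range P, ((List.range P).map (fun j => nextSeq^[i] f (N + j))).count x := by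
    simp only [c, mul_add, mul_one, ← add_assoc, mul_comm P 2]
    exact count_triangleEntries_add_two_mul hfix hper (by omega) x
  exact eq_of_const_second_difference (hrec a) (hrec b) (h₀ a b) (by simpa [c] using h₁ a b)
    (by simpa [c, mul_comm P 2] using h₂ a b) k

end Recurrence

/-- `L` lists the first `N` terms followed by one period of length `P`. -/
def eventuallyPeriodicSeq (N P : ℕ) (L : List (ZMod m)) (j : ℕ) : ZMod m :=
  L.getD (if j < N then j else N + (j - N) % P) 0

theorem periodic_eventuallyPeriodicSeq (N P : ℕ) (L : List (ZMod m)) :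
    Function.Periodic (fun j => eventuallyPeriodicSeq N P L (N + j)) P := by
  intro j
  simp [eventuallyPeriodicSeq]

theorem nextSeq_iterate_eq_self {f : ℕ → ZMod m} {N P k : ℕ} (hP : 0 < P)
    (hper : Function.Periodic (fun j => f (N + j)) P)
    (h : nextRow^[k] ((List.range (N + P + k)).map f) = (List.range (N + P)).map f) :
    nextSeq^[k] f = f := by
  rw [nextRow_iterate_map_range, Nat.add_sub_cancel, List.map_inj_left] at h
  funext j
  induction j using Nat.strong_induction_on with
  | _ j ih =>
    by_cases hj : j < N + P
    · exact h j (List.mem_range.2 hj)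
    · obtain ⟨s, rfl⟩ : ∃ s, j = N + (s + P) := ⟨j - N - P, by omega⟩
      exact (periodic_nextSeq_iterate hper k s).trans ((ih _ (by omega)).trans (hper s).symm)

theorem exists_isBalanced_of_seed (L : List (ZMod 4)) {n₀ : ℕ} (hn₀ : 11 ≤ n₀)
    (hfix : nextRow^[24] ((List.range 48).map (eventuallyPeriodicSeq 12 12 L)) =
      (List.range 24).map (eventuallyPeriodicSeq 12 12 L))
    (h₀ : IsBalanced ((List.range n₀).map (eventuallyPeriodicSeq 12 12 L)))
    (h₁ : IsBalanced ((List.range (n₀ + 24)).map (eventuallyPeriodicSeq 12 12 L)))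
    (h₂ : IsBalanced ((List.range (n₀ + 48)).map (eventuallyPeriodicSeq 12 12 L)))
    {n : ℕ} (hn : n₀ ≤ n) (hmod : n % 24 = n₀ % 24) :
    ∃ l : List (ZMod 4), l.length = n ∧ IsBalanced l := by
  have hper := periodic_eventuallyPeriodicSeq 12 12 L
  have hfix' := nextSeq_iterate_eq_self (by norm_num) hper hfix
  obtain ⟨t, rfl⟩ : ∃ t, n = n₀ + 24 * t := ⟨(n - n₀) / 24, by omega⟩
  exact ⟨_, by simp, isBalanced_map_range_add_mul hfix' (hper.nat_mul 2) (by omega) h₀ h₁ h₂ t⟩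

def seed7 : List (ZMod 4) :=
  [2, 3, 2, 3, 2, 3, 1, 1, 1, 0, 2, 2, 0, 0, 1, 3, 1, 2, 1, 3, 3, 2, 2, 2]
def seed8 : List (ZMod 4) :=
  [2, 3, 2, 1, 1, 0, 3, 2, 0, 1, 0, 3, 0, 0, 0, 1, 2, 1, 2, 0, 2, 3, 2, 3]
def seed15 : List (ZMod 4) :=
  [1, 2, 0, 2, 3, 3, 0, 1, 3, 3, 2, 2, 0, 0, 0, 1, 1, 1, 2, 1, 3, 3, 2, 2]
def seed16 : List (ZMod 4) :=
  [1, 2, 3, 0, 3, 1, 1, 3, 0, 3, 3, 3, 0, 0, 0, 0, 2, 1, 1, 1, 2, 3, 3, 3]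
def seed23 : List (ZMod 4) :=
  [0, 1, 2, 3, 1, 3, 2, 1, 3, 3, 2, 3, 0, 0, 1, 0, 1, 1, 3, 1, 3, 3, 0, 3]
def seed24 : List (ZMod 4) :=
  [3, 2, 1, 2, 2, 2, 0, 1, 1, 2, 2, 1, 0, 0, 0, 0, 1, 2, 2, 3, 3, 2, 2, 1]

theorem exists_isBalanced_of_mod_eight {n : ℕ} (h : n % 8 = 0 ∨ n % 8 = 7) :
    ∃ l : List (ZMod 4), l.length = n ∧ IsBalanced l := by
  rcases (by omega : n = 0 ∨ n = 7 ∨ n = 8 ∨ (31 ≤ n ∧ n % 24 = 7) ∨ (32 ≤ n ∧ n % 24 = 8) ∨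
      (15 ≤ n ∧ n % 24 = 15) ∨ (16 ≤ n ∧ n % 24 = 16) ∨ (23 ≤ n ∧ n % 24 = 23) ∨
      (24 ≤ n ∧ n % 24 = 0)) with
    rfl | rfl | rfl | ⟨hn, hr⟩ | ⟨hn, hr⟩ | ⟨hn, hr⟩ | ⟨hn, hr⟩ | ⟨hn, hr⟩ | ⟨hn, hr⟩
  · exact ⟨[], rfl, fun _ _ => rfl⟩
  -- `exists_isBalanced_of_seed` needs `11 ≤ n₀`, so the sizes 7 and 8 are checked directly.
  · exact ⟨[2, 3, 2, 3, 2, 3, 1], rfl, by decide⟩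
  · exact ⟨[2, 3, 2, 1, 1, 0, 3, 2], rfl, by decide⟩
  · refine exists_isBalanced_of_seed seed7 (n₀ := 31) ?_ ?_ ?_ ?_ ?_ hn hr <;> decide +kernel
  · refine exists_isBalanced_of_seed seed8 (n₀ := 32) ?_ ?_ ?_ ?_ ?_ hn hr <;> decide +kernel
  · refine exists_isBalanced_of_seed seed15 (n₀ := 15) ?_ ?_ ?_ ?_ ?_ hn hr <;> decide +kernel
  · refine exists_isBalanced_of_seed seed16 (n₀ := 16) ?_ ?_ ?_ ?_ ?_ hn hr <;> decide +kernel
  · refine exists_isBalanced_of_seed seed23 (n₀ := 23) ?_ ?_ ?_ ?_ ?_ hn hr <;> decide +kernel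
  · refine exists_isBalanced_of_seed seed24 (n₀ := 24) ?_ ?_ ?_ ?_ ?_ hn hr <;> decide +kernel

theorem stmt0_general (n : ℕ) :
    (∃ l : List (ZMod 4), l.length = n ∧ IsBalanced l) ↔ (n + 1).choose 2 % 4 = 0 := by
  constructor
  · rintro ⟨l, rfl, hl⟩
    exact Nat.mod_eq_zero_of_dvd (dvd_choose_two_of_isBalanced hl)
  · rw [choose_two_succ_mod_four_eq_zero_iff]
    exact exists_isBalanced_of_mod_eight

theorem stmt0 (n : ℕ) (hn : 0 < n) :
    (∃ l : List (ZMod 4), l.length = n ∧ IsBalanced l) ↔ (n + 1).choose 2 % 4 = 0 :=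
  stmt0_general n
end

section
/- Let Q_1, Q_2, Q_3, Q_4 be the eventually periodic sequences in Z/2Z given by Q_1 = 0100(001001011100)^∞, Q_2 = (010010000111)^∞, Q_3 = 0101(011000011000)^∞, Q_4 = 0101(101000101000)^∞. Then for every i with 1 ≤ i ≤ 4 and every integer k ≥ 0, the Steinhaus triangle of the initial segment Q_i[4k] of length 4k is strongly balanced in Z/2Z. -/
/-- The Steinhaus triangle of `l` is strongly balanced (with respect to a
given `step`): for every `t` with `step * t ≤ l.length`, the Steinhaus triangle
of the initial segment of `l` of length `l.length - step * t` is balanced. -/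
def IsStronglyBalanced {m : ℕ} (step : ℕ) (l : List (ZMod m)) : Prop :=
  ∀ t : ℕ, step * t ≤ l.length → IsBalanced (l.take (l.length - step * t))

/-- The eventually periodic sequence with initial block `I` and period `P`. -/
def evPeriodic {m : ℕ} (I P : List (ZMod m)) : ℕ → ZMod m :=
  fun i => if i < I.length then I.getD i 0 else P.getD ((i - I.length) % P.length) 0

/-- The initial segment of length `l` of the sequence `S`. -/
def seg {m : ℕ} (S : ℕ → ZMod m) (l : ℕ) : List (ZMod m) :=
  (List.range l).map S

def Q1 : ℕ → ZMod 2 :=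
  evPeriodic ([0,1,0,0] : List (ZMod 2)) ([0,0,1,0,0,1,0,1,1,1,0,0] : List (ZMod 2))

def Q2 : ℕ → ZMod 2 :=
  evPeriodic ([] : List (ZMod 2)) ([0,1,0,0,1,0,0,0,0,1,1,1] : List (ZMod 2))

def Q3 : ℕ → ZMod 2 :=
  evPeriodic ([0,1,0,1] : List (ZMod 2)) ([0,1,1,0,0,0,0,1,1,0,0,0] : List (ZMod 2))

def Q4 : ℕ → ZMod 2 :=
  evPeriodic ([0,1,0,1] : List (ZMod 2)) ([1,0,1,0,0,0,1,0,1,0,0,0] : List (ZMod 2))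

/-!
The triangle of `S[n + p]` consists of its top `p` rows and the triangle of `∂ᵖS[n]`, where
`∂S j = S j + S (j + 1)`. In characteristic 2, `∂^(2ᵏ) Q j = Q j + Q (j + 2ᵏ)`; for the four
sequences, which are periodic with period 12 from index 4, this gives `∂¹⁶Q = ∂⁴Q`, hence
`∂¹²(∂¹²Q) = ∂¹²Q`. By eventual periodicity the number of ones in the top twelve rows grows by a
constant whenever the length grows by 12, so together with the idempotence the number of ones in
the triangle of `Q[n]` has a constant second difference with step 12. So does `n (n + 1) / 4`,
half the size of the triangle; hence the two agree for all `n = 4j` once they agree for `j ≤ 10`,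
a finite computation (the lengths 16, 28 and 40 pin down the unknown constant).
-/

open Finset Function

namespace Steinhaus

variable {m : ℕ}

def derived (S : ℕ → ZMod m) : ℕ → ZMod m := fun j => S j + S (j + 1)

theorem length_nextRow (l : List (ZMod m)) : (nextRow l).length = l.length - 1 := by
  simp [nextRow]

theorem triangleEntries_eq_append {l : List (ZMod m)} (hl : l ≠ []) :
    triangleEntries l = l ++ triangleEntries (nextRow l) := by
  obtain ⟨n, hn⟩ := Nat.exists_eq_succ_of_ne_zero (List.length_pos_iff.mpr hl).ne'
  simp only [triangleEntries, triangleRows, hn, length_nextRow, List.range_succ_eq_map,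
    List.map_cons, List.map_map, List.flatten_cons]
  rfl

theorem two_mul_length_triangleEntries (l : List (ZMod m)) :
    2 * (triangleEntries l).length = l.length * (l.length + 1) := by
  induction h : l.length generalizing l with
  | zero => simp_all [triangleEntries, triangleRows]
  | succ n ih =>
    rw [triangleEntries_eq_append (List.ne_nil_of_length_eq_add_one h), List.length_append,
      mul_add, ih _ (by rw [length_nextRow, h, Nat.add_sub_cancel]), h]
    ring

@[simp]
theorem length_seg (S : ℕ → ZMod m) (n : ℕ) : (seg S n).length = n := by
  simp [seg]

theorem seg_add (S : ℕ → ZMod m) (a b : ℕ) :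
    seg S (a + b) = seg S a ++ seg (fun j => S (a + j)) b := by
  simp [seg, List.range_add, comp_def]

theorem take_seg (S : ℕ → ZMod m) (k n : ℕ) : (seg S n).take k = seg S (min k n) := by
  simp [seg, ← List.map_take, List.take_range]

theorem nextRow_seg (S : ℕ → ZMod m) (n : ℕ) : nextRow (seg S (n + 1)) = seg (derived S) n := by
  apply List.ext_getElem
  · simp [nextRow]
  · intro i _ _
    simp [nextRow, seg, derived]

theorem triangleEntries_seg_succ (S : ℕ → ZMod m) (n : ℕ) :
    triangleEntries (seg S (n + 1)) = seg S (n + 1) ++ triangleEntries (seg (derived S) n) := by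
  rw [triangleEntries_eq_append (by simp [← List.length_pos_iff]), nextRow_seg]

theorem periodic_derived {S : ℕ → ZMod m} {a p : ℕ}
    (hS : Periodic (fun j => S (a + j)) p) : Periodic (fun j => derived S (a + j)) p := by
  intro x
  have h₀ : S (a + (x + p)) = S (a + x) := hS x
  have h₁ : S (a + (x + 1 + p)) = S (a + (x + 1)) := hS (x + 1)
  change S (a + (x + p)) + S (a + (x + p) + 1) = S (a + x) + S (a + x + 1)
  rw [show a + (x + p) + 1 = a + (x + 1 + p) by ring, h₀, h₁, add_assoc]

theorem periodic_derived_iterate {S : ℕ → ZMod m} {a p : ℕ}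
    (hS : Periodic (fun j => S (a + j)) p) (i : ℕ) :
    Periodic (fun j => derived^[i] S (a + j)) p := by
  induction i with
  | zero => exact hS
  | succ i ih => simpa only [iterate_succ_apply'] using periodic_derived ih

theorem evPeriodic_periodic {I P : List (ZMod m)} {a : ℕ} (ha : I.length ≤ a) :
    Periodic (fun j => evPeriodic I P (a + j)) P.length := by
  intro x
  simp only [evPeriodic]
  rw [if_neg (by omega), if_neg (by omega),
    show a + (x + P.length) - I.length = a + x - I.length + P.length by omega, Nat.add_mod_right]

theorem derived_iterate_two_pow (U : ℕ → ZMod 2) (k : ℕ) :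
    derived^[2 ^ k] U = fun j => U j + U (j + 2 ^ k) := by
  induction k generalizing U with
  | zero => rfl
  | succ k ih =>
    rw [pow_succ, mul_two, iterate_add_apply, ih, ih]
    funext j
    simp only [add_assoc]
    linear_combination CharTwo.add_self_eq_zero (U (j + 2 ^ k))

theorem derived_iterate_twelve_idem {Q : ℕ → ZMod 2} (hQ : Periodic (fun j => Q (4 + j)) 12) :
    derived^[12] (derived^[12] Q) = derived^[12] Q := by
  have h16 : derived^[16] Q = derived^[4] Q := by
    change derived^[2 ^ 4] Q = derived^[2 ^ 2] Q
    simp only [derived_iterate_two_pow]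
    funext j
    have : Q (4 + (j + 12)) = Q (4 + j) := hQ j
    rw [show j + 2 ^ 4 = 4 + (j + 12) by ring, this, show j + 2 ^ 2 = 4 + j by ring]
  calc derived^[12] (derived^[12] Q) = derived^[8] (derived^[16] Q) := by
        simp only [← iterate_add_apply]
    _ = derived^[12] Q := by rw [h16, ← iterate_add_apply]

def countOnes (U : ℕ → ZMod 2) (n : ℕ) : ℕ := (seg U n).count 1

def triangleOnes (S : ℕ → ZMod 2) (n : ℕ) : ℕ := (triangleEntries (seg S n)).count 1

/-- The ones in the top `p` rows of the triangle of `S[n + p]`. -/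
def bandOnes (S : ℕ → ZMod 2) (p n : ℕ) : ℕ :=
  ∑ i ∈ range p, countOnes (derived^[i] S) (n + p - i)

theorem countOnes_add (U : ℕ → ZMod 2) (a b : ℕ) :
    countOnes U (a + b) = countOnes U a + countOnes (fun j => U (a + j)) b := by
  simp [countOnes, seg_add]

theorem countOnes_add_period {U : ℕ → ZMod 2} {a p : ℕ} (hU : Periodic (fun j => U (a + j)) p)
    {l : ℕ} (hl : a ≤ l) :
    countOnes U (l + p) = countOnes U l + countOnes (fun j => U (a + j)) p := by
  obtain ⟨r, rfl⟩ := Nat.exists_eq_add_of_le hl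
  have hshift : (fun j => U (a + (p + j))) = fun j => U (a + j) := by
    funext j
    rw [add_comm p]
    exact hU j
  rw [add_assoc, countOnes_add, countOnes_add U a r, add_comm r, countOnes_add _ p, hshift]
  ring

theorem triangleOnes_succ (S : ℕ → ZMod 2) (n : ℕ) :
    triangleOnes S (n + 1) = countOnes S (n + 1) + triangleOnes (derived S) n := by
  simp [triangleOnes, countOnes, triangleEntries_seg_succ]

theorem triangleOnes_add (S : ℕ → ZMod 2) (p n : ℕ) :
    triangleOnes S (n + p) = bandOnes S p n + triangleOnes (derived^[p] S) n := by
  induction p generalizing S with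
  | zero => simp [bandOnes]
  | succ p ih =>
    have hband : bandOnes S (p + 1) n = bandOnes (derived S) p n + countOnes S (n + p + 1) := by
      rw [bandOnes, sum_range_succ', bandOnes]
      congr 1
      exact sum_congr rfl fun i hi => by
        rw [iterate_succ_apply, show n + (p + 1) - (i + 1) = n + p - i by omega]
    rw [← add_assoc, triangleOnes_succ, ih, hband, iterate_succ_apply]
    ring

theorem bandOnes_add_period {S : ℕ → ZMod 2} {a p : ℕ} (hS : Periodic (fun j => S (a + j)) p) :
    ∃ c, ∀ n, a ≤ n + 1 → bandOnes S p (n + p) = bandOnes S p n + c := by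
  refine ⟨∑ i ∈ range p, countOnes (fun j => derived^[i] S (a + j)) p, fun n hn => ?_⟩
  rw [bandOnes, bandOnes, ← sum_add_distrib]
  refine sum_congr rfl fun i hi => ?_
  have hi : i < p := mem_range.mp hi
  rw [show n + p + p - i = n + p - i + p by omega]
  exact countOnes_add_period (periodic_derived_iterate hS i) (by omega)

theorem triangleOnes_second_difference {S : ℕ → ZMod 2} {a p : ℕ}
    (hS : Periodic (fun j => S (a + j)) p)
    (hfix : derived^[p] (derived^[p] S) = derived^[p] S) :
    ∃ c, ∀ n, a ≤ n + 1 →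
      triangleOnes S (n + 3 * p) + triangleOnes S (n + p) = 2 * triangleOnes S (n + 2 * p) + c := by
  obtain ⟨cS, hcS⟩ := bandOnes_add_period hS
  obtain ⟨cT, hcT⟩ := bandOnes_add_period (periodic_derived_iterate hS p)
  refine ⟨cT, fun n hn => ?_⟩
  have hT : ∀ n, triangleOnes (derived^[p] S) (n + p) =
      bandOnes (derived^[p] S) p n + triangleOnes (derived^[p] S) n := fun n => by
    rw [triangleOnes_add, hfix]
  have h₁ := triangleOnes_add S p n
  have h₂ := triangleOnes_add S p (n + p)
  have h₃ := triangleOnes_add S p (n + 2 * p)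
  have hS₁ := hcS n hn
  have hS₂ := hcS (n + p) (by omega)
  have hT₁ := hT n
  have hT₂ := hT (n + p)
  have hT₃ := hcT n hn
  rw [show n + p + p = n + 2 * p by ring] at h₂ hS₂ hT₂
  rw [show n + 2 * p + p = n + 3 * p by ring] at h₃
  omega

theorem eq_of_second_difference {f h : ℕ → ℕ} {N q c d : ℕ} (hq : 0 < q)
    (hf : ∀ j, N ≤ j → f (j + 2 * q) + f j = 2 * f (j + q) + c)
    (hh : ∀ j, N ≤ j → h (j + 2 * q) + h j = 2 * h (j + q) + d)
    (hbase : ∀ j ≤ N + 2 * q, f j = h j) (j : ℕ) : f j = h j := by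
  have hcd : c = d := by
    have := hf N le_rfl
    have := hh N le_rfl
    rw [hbase N (by omega), hbase (N + q) (by omega), hbase (N + 2 * q) le_rfl] at *
    omega
  induction j using Nat.strong_induction_on with
  | _ j ih =>
    rcases le_or_gt j (N + 2 * q) with hj | hj
    · exact hbase j hj
    obtain ⟨i, rfl⟩ : ∃ i, j = i + 2 * q := ⟨j - 2 * q, by omega⟩
    have := ih i (by omega)
    have := ih (i + q) (by omega)
    have := hf i (by omega)
    have := hh i (by omega)
    omega

theorem triangleOnes_four_mul {Q : ℕ → ZMod 2} (hQ : Periodic (fun j => Q (4 + j)) 12)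
    (hbase : ∀ j ≤ 10, triangleOnes Q (4 * j) = j * (4 * j + 1)) (j : ℕ) :
    triangleOnes Q (4 * j) = j * (4 * j + 1) := by
  obtain ⟨c, hc⟩ := triangleOnes_second_difference hQ (derived_iterate_twelve_idem hQ)
  refine eq_of_second_difference (f := fun j => triangleOnes Q (4 * j)) (N := 4) (q := 3)
    (c := c) (d := 72) (by norm_num) (fun j hj => ?_) (fun j _ => by ring) hbase j
  convert hc (4 * (j - 3)) (by omega) using 4 <;> omega

theorem count_zero_add_count_one (L : List (ZMod 2)) : L.count 0 + L.count 1 = L.length := by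
  induction L with
  | nil => rfl
  | cons a L ih =>
    rcases (by decide : ∀ x : ZMod 2, x = 0 ∨ x = 1) a with rfl | rfl <;>
      simp <;> omega

theorem isBalanced_of_four_mul_count_one {l : List (ZMod 2)}
    (h : 4 * (triangleEntries l).count 1 = l.length * (l.length + 1)) : IsBalanced l := by
  have hlen := two_mul_length_triangleEntries l
  have h01 := count_zero_add_count_one (triangleEntries l)
  intro a b
  fin_cases a <;> fin_cases b <;> simp only [Fin.zero_eta, Fin.mk_one] <;> omega

theorem isStronglyBalanced_seg_mul {m s : ℕ} {S : ℕ → ZMod m}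
    (h : ∀ j, IsBalanced (seg S (s * j))) (k : ℕ) : IsStronglyBalanced s (seg S (s * k)) := by
  intro t _
  rw [length_seg, take_seg, min_eq_left (Nat.sub_le _ _), ← Nat.mul_sub]
  exact h _

theorem isStronglyBalanced_evPeriodic {I P : List (ZMod 2)} (hI : I.length ≤ 4)
    (hP : P.length = 12)
    (hbase : ∀ j ≤ 10, triangleOnes (evPeriodic I P) (4 * j) = j * (4 * j + 1)) (k : ℕ) :
    IsStronglyBalanced 4 (seg (evPeriodic I P) (4 * k)) := by
  have hQ : Periodic (fun j => evPeriodic I P (4 + j)) 12 := hP ▸ evPeriodic_periodic hI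
  refine isStronglyBalanced_seg_mul (fun j => isBalanced_of_four_mul_count_one ?_) k
  rw [length_seg]
  change 4 * triangleOnes _ (4 * j) = _
  rw [triangleOnes_four_mul hQ hbase]
  ring

end Steinhaus

set_option maxRecDepth 10000 in
theorem stmt11 (k : ℕ) :
    IsStronglyBalanced 4 (seg Q1 (4 * k)) ∧
    IsStronglyBalanced 4 (seg Q2 (4 * k)) ∧
    IsStronglyBalanced 4 (seg Q3 (4 * k)) ∧
    IsStronglyBalanced 4 (seg Q4 (4 * k)) :=
  ⟨Steinhaus.isStronglyBalanced_evPeriodic (by decide) rfl (by decide) k,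
    Steinhaus.isStronglyBalanced_evPeriodic (by decide) rfl (by decide) k,
    Steinhaus.isStronglyBalanced_evPeriodic (by decide) rfl (by decide) k,
    Steinhaus.isStronglyBalanced_evPeriodic (by decide) rfl (by decide) k⟩
end
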